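/- arXiv:1902.02271 — 3 statements merged into one kernel-verified Lean document; each statement's English description precedes it below -/
import Mathlib

section
/- Let x_i, x_j, x_k be affinely independent points in a real inner product space. For each edge of the triangle let l denote its length and t the outward unit edge-perpendicular vector of that edge with respect to the triangle (defined via orthogonal projection of the opposite vertex onto the edge's line). Then the edge-normal vectors close up: l_jk · t_jk + l_ki · t_ki + l_ij · t_ij = 0, where l_ab = ‖x_a − x_b‖. -/
/-!
Write `p` for the vertex opposite the edge `qr` and `f` for its foot on that edge. Then
`‖q - r‖ • (f - p) / ‖f - p‖ = ‖q - r‖² • (f - p) / (‖q - r‖ * ‖f - p‖)`. The denominator is twice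
the area of the triangle, the square root of the Gram determinant of its edge vectors, so it does
not depend on the edge; the numerator is an explicit combination of the edge vectors, and the three
numerators sum to zero.
-/

open RealInnerProductSpace

section

variable {E : Type*} [NormedAddCommGroup E] [InnerProductSpace ℝ E]

def gramDet (u v : E) : ℝ := ‖u‖ ^ 2 * ‖v‖ ^ 2 - ⟪u, v⟫ ^ 2

theorem gramDet_comm (u v : E) : gramDet u v = gramDet v u := by
  rw [gramDet, gramDet, real_inner_comm, mul_comm]

theorem gramDet_add_smul_right (u v : E) (s : ℝ) : gramDet u (v + s • u) = gramDet u v := by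
  simp only [gramDet, ← real_inner_self_eq_norm_sq, inner_add_left, inner_add_right,
    real_inner_smul_left, real_inner_smul_right, real_inner_comm u v]
  ring

theorem gramDet_of_inner_eq_zero {u v : E} (h : ⟪u, v⟫ = 0) :
    gramDet u v = ‖u‖ ^ 2 * ‖v‖ ^ 2 := by
  rw [gramDet, h]; ring

theorem gramDet_sub_rotate (p q r : E) : gramDet (r - q) (p - q) = gramDet (q - p) (r - p) := by
  simp only [gramDet, ← real_inner_self_eq_norm_sq, inner_sub_left, inner_sub_right,
    real_inner_comm p q, real_inner_comm p r, real_inner_comm q r]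
  ring

def scaledAltitude (p q r : E) : E := ⟪r - p, r - q⟫ • (q - p) + ⟪q - p, q - r⟫ • (r - p)

theorem scaledAltitude_add_rotate (p q r : E) :
    scaledAltitude p q r + scaledAltitude q r p + scaledAltitude r p q = 0 := by
  simp only [scaledAltitude, inner_sub_left, inner_sub_right,
    real_inner_comm p q, real_inner_comm p r, real_inner_comm q r]
  module

variable {p q r f : E}

theorem norm_sub_sq_smul_foot_sub (hmem : f ∈ affineSpan ℝ {q, r})
    (hperp : ⟪p - f, r - q⟫ = 0) : ‖q - r‖ ^ 2 • (f - p) = scaledAltitude p q r := by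
  obtain ⟨t, rfl⟩ := mem_affineSpan_pair_iff_exists_lineMap_eq.mp hmem
  rw [AffineMap.lineMap_apply, vsub_eq_sub, vadd_eq_add] at hperp ⊢
  simp only [scaledAltitude, ← real_inner_self_eq_norm_sq, inner_sub_left, inner_sub_right,
    inner_add_left, real_inner_smul_left, real_inner_comm q r] at hperp ⊢
  linear_combination (norm := module) (-hperp) • (r - q)

theorem norm_sub_mul_norm_foot_sub (hmem : f ∈ affineSpan ℝ {q, r})
    (hperp : ⟪p - f, r - q⟫ = 0) : ‖q - r‖ * ‖f - p‖ = √(gramDet (q - p) (r - p)) := by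
  obtain ⟨t, rfl⟩ := mem_affineSpan_pair_iff_exists_lineMap_eq.mp hmem
  rw [AffineMap.lineMap_apply, vsub_eq_sub, vadd_eq_add] at hperp ⊢
  have hgram : gramDet (q - p) (r - p) = gramDet (r - q) (t • (r - q) + q - p) := by
    calc gramDet (q - p) (r - p) = gramDet (q - p) ((r - q) + (1 : ℝ) • (q - p)) := by
          rw [one_smul, sub_add_sub_cancel]
      _ = gramDet (r - q) ((q - p) + t • (r - q)) := by
          rw [gramDet_add_smul_right, gramDet_add_smul_right, gramDet_comm]
      _ = gramDet (r - q) (t • (r - q) + q - p) := by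
          rw [add_comm, add_sub_assoc]
  have horth : ⟪r - q, t • (r - q) + q - p⟫ = 0 := by
    rw [real_inner_comm, ← neg_sub, inner_neg_left, hperp, neg_zero]
  rw [hgram, gramDet_of_inner_eq_zero horth, ← mul_pow, norm_sub_rev r q,
    Real.sqrt_sq (by positivity)]

theorem norm_sub_smul_unit_foot_sub (hmem : f ∈ affineSpan ℝ {q, r})
    (hperp : ⟪p - f, r - q⟫ = 0) :
    ‖q - r‖ • (‖f - p‖⁻¹ • (f - p)) = (√(gramDet (q - p) (r - p)))⁻¹ • scaledAltitude p q r := by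
  rw [← norm_sub_mul_norm_foot_sub hmem hperp, ← norm_sub_sq_smul_foot_sub hmem hperp,
    smul_smul, smul_smul, mul_inv, mul_right_comm, sq, ← mul_assoc, inv_mul_mul_self]

end

theorem edge_normals_close_up_general
    {E : Type*} [NormedAddCommGroup E] [InnerProductSpace ℝ E]
    (xi xj xk f_jk f_ki f_ij : E)
    (hmem_jk : f_jk ∈ affineSpan ℝ {xj, xk})
    (hperp_jk : ⟪xi - f_jk, xk - xj⟫ = 0)
    (hmem_ki : f_ki ∈ affineSpan ℝ {xk, xi})
    (hperp_ki : ⟪xj - f_ki, xi - xk⟫ = 0)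
    (hmem_ij : f_ij ∈ affineSpan ℝ {xi, xj})
    (hperp_ij : ⟪xk - f_ij, xj - xi⟫ = 0) :
    ‖xj - xk‖ • (‖f_jk - xi‖⁻¹ • (f_jk - xi)) +
    ‖xk - xi‖ • (‖f_ki - xj‖⁻¹ • (f_ki - xj)) +
    ‖xi - xj‖ • (‖f_ij - xk‖⁻¹ • (f_ij - xk)) = 0 := by
  rw [norm_sub_smul_unit_foot_sub hmem_jk hperp_jk, norm_sub_smul_unit_foot_sub hmem_ki hperp_ki,
    norm_sub_smul_unit_foot_sub hmem_ij hperp_ij, gramDet_sub_rotate xj xk xi,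
    gramDet_sub_rotate xi xj xk, ← smul_add, ← smul_add, scaledAltitude_add_rotate, smul_zero]

/-- For a nondegenerate triangle `xi xj xk` in a real inner product space, with `f_jk`, `f_ki`,
`f_ij` the orthogonal projections of the vertex opposite each edge onto the line of that edge
(characterized by affine-span membership and orthogonality to the edge direction), the
length-weighted outward unit edge-perpendicular vectors close up:
`l_jk • t_jk + l_ki • t_ki + l_ij • t_ij = 0`. -/
theorem edge_normals_close_up
    {E : Type*} [NormedAddCommGroup E] [InnerProductSpace ℝ E]
    (xi xj xk f_jk f_ki f_ij : E)
    (hind : AffineIndependent ℝ ![xi, xj, xk])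
    (hmem_jk : f_jk ∈ affineSpan ℝ {xj, xk})
    (hperp_jk : ⟪xi - f_jk, xk - xj⟫ = 0)
    (hmem_ki : f_ki ∈ affineSpan ℝ {xk, xi})
    (hperp_ki : ⟪xj - f_ki, xi - xk⟫ = 0)
    (hmem_ij : f_ij ∈ affineSpan ℝ {xi, xj})
    (hperp_ij : ⟪xk - f_ij, xj - xi⟫ = 0) :
    ‖xj - xk‖ • (‖f_jk - xi‖⁻¹ • (f_jk - xi)) +
    ‖xk - xi‖ • (‖f_ki - xj‖⁻¹ • (f_ki - xj)) +
    ‖xi - xj‖ • (‖f_ij - xk‖⁻¹ • (f_ij - xk)) = 0 :=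
  edge_normals_close_up_general xi xj xk f_jk f_ki f_ij hmem_jk hperp_jk hmem_ki hperp_ki hmem_ij
    hperp_ij
end

section
/- Let x_i, x_j, x_k be affinely independent points in a real inner product space, with interior angles α_j = ∠(x_i, x_j, x_k) at x_j and α_k = ∠(x_i, x_k, x_j) at x_k. Let x_f be the orthogonal projection of x_i onto the line through x_j and x_k, set t_jk = (x_f − x_i)/‖x_f − x_i‖ and l_jk = ‖x_j − x_k‖. Then the cotangent identity l_jk • t_jk = cot(α_k) • (x_j − x_i) + cot(α_j) • (x_k − x_i) holds, where cot α = cos α / sin α. -/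
open EuclideanGeometry RealInnerProductSpace

/-! Write `xf = xj + t • (xk - xj)` and `f = xf - xi`, which is orthogonal to `v = xk - xj`.
Then `xi - xj = t • v - f`, and the cotangent of the angle between `t • v - f` and `v` is the
signed ratio `t * ‖v‖ / ‖f‖` of the legs of the right triangle it spans; likewise the angle at `xk`
has cotangent `(1 - t) * ‖v‖ / ‖f‖`. The identity reduces to
`(1 - t) • (f - t • v) + t • (f + (1 - t) • v) = f`. -/

namespace InnerProductGeometry

variable {V : Type*} [NormedAddCommGroup V] [InnerProductSpace ℝ V]

theorem cot_angle (x y : V) :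
    Real.cot (angle x y) = ⟪x, y⟫ / √(⟪x, x⟫ * ⟪y, y⟫ - ⟪x, y⟫ * ⟪x, y⟫) := by
  by_cases h : ‖x‖ * ‖y‖ = 0
  · rcases mul_eq_zero.1 h with hx | hy
    · simp [norm_eq_zero.1 hx, Real.cot_eq_cos_div_sin]
    · simp [norm_eq_zero.1 hy, Real.cot_eq_cos_div_sin]
  · rw [← sin_angle_mul_norm_mul_norm, ← cos_angle_mul_norm_mul_norm, mul_div_mul_right _ _ h,
      Real.cot_eq_cos_div_sin]

theorem cot_angle_smul_sub_of_inner_eq_zero {f v : V} (t : ℝ) (h : ⟪f, v⟫ = 0) :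
    Real.cot (angle (t • v - f) v) = t * ‖v‖ / ‖f‖ := by
  have h' : ⟪v, f⟫ = 0 := by rw [real_inner_comm, h]
  have hxv : ⟪t • v - f, v⟫ = t * ‖v‖ ^ 2 := by
    rw [inner_sub_left, real_inner_smul_left, h, real_inner_self_eq_norm_sq, sub_zero]
  have hxx : ⟪t • v - f, t • v - f⟫ = t ^ 2 * ‖v‖ ^ 2 + ‖f‖ ^ 2 := by
    simp only [inner_sub_left, inner_sub_right, real_inner_smul_left, real_inner_smul_right, h, h']
    rw [real_inner_self_eq_norm_sq, real_inner_self_eq_norm_sq]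
    ring
  have hgram : ⟪t • v - f, t • v - f⟫ * ⟪v, v⟫ - ⟪t • v - f, v⟫ * ⟪t • v - f, v⟫
      = (‖f‖ * ‖v‖) ^ 2 := by
    rw [hxx, hxv, real_inner_self_eq_norm_sq]; ring
  rw [cot_angle, hgram, Real.sqrt_sq (by positivity), hxv]
  rcases eq_or_ne ‖v‖ 0 with hv0 | hv0
  · simp [hv0]
  · field_simp

end InnerProductGeometry

theorem edge_perpendicular_cotangent_identity_general
    {E : Type*} [NormedAddCommGroup E] [InnerProductSpace ℝ E]
    (xi xj xk xf : E)
    (hmem : xf ∈ affineSpan ℝ {xj, xk})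
    (hperp : ⟪xi - xf, xk - xj⟫ = 0) :
    ‖xj - xk‖ • (‖xf - xi‖⁻¹ • (xf - xi)) =
      Real.cot (∠ xi xk xj) • (xj - xi) + Real.cot (∠ xi xj xk) • (xk - xi) := by
  obtain ⟨t, rfl⟩ := mem_affineSpan_pair_iff_exists_lineMap_eq.1 hmem
  rw [AffineMap.lineMap_apply, vsub_eq_sub, vadd_eq_add] at hperp ⊢
  set f := t • (xk - xj) + xj - xi
  have hfj : ⟪f, xk - xj⟫ = 0 := by
    rw [← neg_eq_zero, ← inner_neg_left, neg_sub]; exact hperp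
  have hfk : ⟪f, xj - xk⟫ = 0 := by rw [← neg_sub xk xj, inner_neg_right, hfj, neg_zero]
  have hcotj : Real.cot (∠ xi xj xk) = t * ‖xk - xj‖ / ‖f‖ := by
    rw [EuclideanGeometry.angle, vsub_eq_sub, vsub_eq_sub,
      ← InnerProductGeometry.cot_angle_smul_sub_of_inner_eq_zero t hfj]
    congr 2; module
  have hcotk : Real.cot (∠ xi xk xj) = (1 - t) * ‖xj - xk‖ / ‖f‖ := by
    rw [EuclideanGeometry.angle, vsub_eq_sub, vsub_eq_sub,
      ← InnerProductGeometry.cot_angle_smul_sub_of_inner_eq_zero (1 - t) hfk]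
    congr 2; module
  rw [hcotj, hcotk, norm_sub_rev xk]
  match_scalars <;> ring

/-- For a nondegenerate triangle `xi xj xk` in a real inner product space, with
`t_jk = (xf - xi) / ‖xf - xi‖` the outward unit edge-perpendicular vector of the edge
`(xj, xk)` (where `xf` is the orthogonal projection of `xi` onto the line through `xj`
and `xk`) and `l_jk = ‖xj - xk‖`, the cotangent identity holds:
`l_jk • t_jk = cot α_k • (xj - xi) + cot α_j • (xk - xi)`, where `α_j = ∠ xi xj xk` and
`α_k = ∠ xi xk xj` are the interior angles at `xj` and `xk`. -/
theorem edge_perpendicular_cotangent_identity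
    {E : Type*} [NormedAddCommGroup E] [InnerProductSpace ℝ E]
    (xi xj xk xf : E)
    (hind : AffineIndependent ℝ ![xi, xj, xk])
    (hmem : xf ∈ affineSpan ℝ {xj, xk})
    (hperp : ⟪xi - xf, xk - xj⟫ = 0) :
    ‖xj - xk‖ • (‖xf - xi‖⁻¹ • (xf - xi)) =
      Real.cot (∠ xi xk xj) • (xj - xi) + Real.cot (∠ xi xj xk) • (xk - xi) :=
  edge_perpendicular_cotangent_identity_general xi xj xk xf hmem hperp
end

section
/- Let x₀ be a point in a real inner product space and let x₁, …, x_n (n ≥ 3, indices taken modulo n) be points such that for every m the triple (x₀, x_m, x_{m+1}) is affinely independent (a closed triangle fan around x₀). For each m let t_m be the outward unit edge-perpendicular vector of the edge (x_m, x_{m+1}) in the triangle (x₀, x_m, x_{m+1}), i.e., t_m = (f_m − x₀)/‖f_m − x₀‖ with f_m the orthogonal projection of x₀ onto the line through x_m and x_{m+1}, and let l_m = ‖x_m − x_{m+1}‖. Then the element-wise sum equals the cotangent edge-wise sum: ∑_{m=1}^{n} l_m • t_m = − ∑_{m=1}^{n} ( cot ∠(x₀, x_{m−1}, x_m) + cot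 ∠(x₀, x_{m+1}, x_m) ) • (x₀ − x_m), where ∠(a, b, c) denotes the Euclidean angle at b between a − b and c − b and cot α = cos α / sin α. -/
/-!
Let `f` be the foot of the altitude from `x₀` in the element `(x₀, a, b)`, `h = ‖f - x₀‖` and
`l = ‖a - b‖`. Writing `f = a + r (b - a)`, the two right triangles at `f` give
`cot ∠(x₀, a, b) = r l / h` and `cot ∠(x₀, b, a) = (1 - r) l / h`, so
`(l / h) (f - x₀) = cot ∠(x₀, b, a) (a - x₀) + cot ∠(x₀, a, b) (b - x₀)`: each element contributes
to each of its two spokes the cotangent of the angle opposite it. Summing over the fan and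
shifting the index of the second term collects, for every spoke, the two angles opposite it.
-/

open EuclideanGeometry RealInnerProductSpace

namespace InnerProductGeometry

variable {V : Type*} [NormedAddCommGroup V] [InnerProductSpace ℝ V]

theorem cot_angle_add_smul_of_inner_eq_zero {w q : V} (s : ℝ) (h : ⟪w, q⟫ = 0) (hw : w ≠ 0)
    (hq : q ≠ 0) : Real.cot (angle (w + s • q) q) = s * ‖q‖ / ‖w‖ := by
  have h' : ⟪q, w⟫ = 0 := by rw [real_inner_comm, h]
  have hp : w + s • q ≠ 0 := by
    intro h0
    have : ⟪w + s • q, w⟫ = ‖w‖ ^ 2 := by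
      rw [inner_add_left, real_inner_smul_left, h', real_inner_self_eq_norm_sq, mul_zero, add_zero]
    rw [h0, inner_zero_left] at this
    exact hw (by simpa using this.symm)
  have hcos : Real.cos (angle (w + s • q) q) * (‖w + s • q‖ * ‖q‖) = s * ‖q‖ ^ 2 := by
    rw [cos_angle_mul_norm_mul_norm, inner_add_left, h, real_inner_smul_left,
      real_inner_self_eq_norm_sq, zero_add]
  have hsin : Real.sin (angle (w + s • q) q) * (‖w + s • q‖ * ‖q‖) = ‖w‖ * ‖q‖ := by
    rw [sin_angle_mul_norm_mul_norm, ← Real.sqrt_sq (by positivity : 0 ≤ ‖w‖ * ‖q‖)]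
    congr 1
    simp only [inner_add_left, inner_add_right, real_inner_smul_left, real_inner_smul_right,
      h, h', real_inner_self_eq_norm_sq, norm_smul, mul_pow, Real.norm_eq_abs, sq_abs]
    ring
  rw [Real.cot_eq_cos_div_sin, ← mul_div_mul_right _ _ (by positivity : ‖w + s • q‖ * ‖q‖ ≠ 0),
    hcos, hsin]
  field_simp

end InnerProductGeometry

namespace EuclideanGeometry

variable {V P : Type*} [NormedAddCommGroup V] [InnerProductSpace ℝ V] [MetricSpace P]
  [NormedAddTorsor V P]

theorem cot_angle_eq_of_lineMap_eq_of_inner_eq_zero {p₀ a b f : P} {r : ℝ}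
    (hf : AffineMap.lineMap a b r = f) (hperp : ⟪p₀ -ᵥ f, b -ᵥ a⟫ = 0) (hp₀f : p₀ ≠ f)
    (hab : a ≠ b) : Real.cot (∠ p₀ a b) = r * dist a b / dist p₀ f := by
  have hsplit : p₀ -ᵥ a = (p₀ -ᵥ f) + r • (b -ᵥ a) := by
    rw [← vsub_add_vsub_cancel p₀ f a, ← hf, AffineMap.lineMap_vsub_left]
  rw [angle, hsplit, InnerProductGeometry.cot_angle_add_smul_of_inner_eq_zero r hperp
    (vsub_ne_zero.2 hp₀f) (vsub_ne_zero.2 hab.symm), dist_comm a b, dist_eq_norm_vsub V,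
    dist_eq_norm_vsub V]

theorem dist_smul_inv_dist_smul_vsub_eq_cot_smul_add_cot_smul {p₀ a b f : P}
    (hind : AffineIndependent ℝ ![p₀, a, b]) (hf : f ∈ line[ℝ, a, b])
    (hperp : ⟪p₀ -ᵥ f, b -ᵥ a⟫ = 0) :
    dist a b • (dist f p₀)⁻¹ • (f -ᵥ p₀) =
      Real.cot (∠ p₀ b a) • (a -ᵥ p₀) + Real.cot (∠ p₀ a b) • (b -ᵥ p₀) := by
  have hab : a ≠ b := fun h =>
    hind.injective.ne (show (1 : Fin 3) ≠ 2 by decide) (by simp [h])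
  have hp₀f : p₀ ≠ f := fun h => (affineIndependent_iff_not_collinear_set.1 hind)
    (collinear_insert_of_mem_affineSpan_pair (h ▸ hf))
  obtain ⟨r, hr⟩ := mem_affineSpan_pair_iff_exists_lineMap_eq.1 hf
  have hr' : AffineMap.lineMap b a (1 - r) = f := by rw [AffineMap.lineMap_apply_one_sub, hr]
  have hperp' : ⟪p₀ -ᵥ f, a -ᵥ b⟫ = 0 := by
    rw [← neg_vsub_eq_vsub_rev b a, inner_neg_right, hperp, neg_zero]
  have hfoot : f -ᵥ p₀ = (1 - r) • (a -ᵥ p₀) + r • (b -ᵥ p₀) := by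
    rw [← hr, AffineMap.lineMap_apply, vadd_vsub_assoc, ← vsub_sub_vsub_cancel_right b a p₀]
    module
  rw [cot_angle_eq_of_lineMap_eq_of_inner_eq_zero hr hperp hp₀f hab,
    cot_angle_eq_of_lineMap_eq_of_inner_eq_zero hr' hperp' hp₀f hab.symm, hfoot, dist_comm b a,
    dist_comm f p₀]
  have hdist : dist p₀ f ≠ 0 := dist_ne_zero.2 hp₀f
  match_scalars <;> field_simp

end EuclideanGeometry

theorem fan_elementwise_sum_eq_cotangent_sum_general
    {E : Type*} [NormedAddCommGroup E] [InnerProductSpace ℝ E]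
    (n : ℕ) [NeZero n]
    (x₀ : E) (x f : ZMod n → E)
    (hind : ∀ m : ZMod n, AffineIndependent ℝ ![x₀, x m, x (m + 1)])
    (hmem : ∀ m : ZMod n, f m ∈ affineSpan ℝ {x m, x (m + 1)})
    (hperp : ∀ m : ZMod n, ⟪x₀ - f m, x (m + 1) - x m⟫ = 0) :
    ∑ m : ZMod n, ‖x m - x (m + 1)‖ • (‖f m - x₀‖⁻¹ • (f m - x₀)) =
      -∑ m : ZMod n,
        (Real.cot (∠ x₀ (x (m - 1)) (x m)) + Real.cot (∠ x₀ (x (m + 1)) (x m))) •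
          (x₀ - x m) := by
  have hshift : ∑ m : ZMod n, Real.cot (∠ x₀ (x m) (x (m + 1))) • (x (m + 1) - x₀) =
      ∑ m : ZMod n, Real.cot (∠ x₀ (x (m - 1)) (x m)) • (x m - x₀) :=
    Fintype.sum_equiv (Equiv.addRight 1) _ _ fun m => by simp
  calc ∑ m : ZMod n, ‖x m - x (m + 1)‖ • (‖f m - x₀‖⁻¹ • (f m - x₀))
      = ∑ m : ZMod n, (Real.cot (∠ x₀ (x (m + 1)) (x m)) • (x m - x₀) +
          Real.cot (∠ x₀ (x m) (x (m + 1))) • (x (m + 1) - x₀)) :=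
        Finset.sum_congr rfl fun m _ => by
          simpa only [dist_eq_norm, vsub_eq_sub] using
            dist_smul_inv_dist_smul_vsub_eq_cot_smul_add_cot_smul (hind m) (hmem m) (hperp m)
    _ = _ := by
        rw [Finset.sum_add_distrib, hshift, ← Finset.sum_add_distrib, ← Finset.sum_neg_distrib]
        refine Finset.sum_congr rfl fun m _ => ?_
        rw [← smul_neg, neg_sub, add_smul, add_comm]

/-- For a closed triangle fan around a vertex `x₀` with neighbors `x 1, …, x n` indexed
cyclically by `ZMod n` (`n ≥ 3`), each element `(x₀, x m, x (m+1))` nondegenerate, with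
`t m = (f m - x₀)/‖f m - x₀‖` the outward unit edge-perpendicular of the edge opposite `x₀`
in element `m` (where `f m` is the orthogonal projection of `x₀` onto the line through `x m`
and `x (m+1)`) and `l m = ‖x m - x (m+1)‖`, the element-wise sum equals the cotangent
edge-wise sum:
`∑ m, l m • t m = -∑ m, (cot ∠(x₀, x (m-1), x m) + cot ∠(x₀, x (m+1), x m)) • (x₀ - x m)`. -/
theorem fan_elementwise_sum_eq_cotangent_sum
    {E : Type*} [NormedAddCommGroup E] [InnerProductSpace ℝ E]
    (n : ℕ) [NeZero n] (hn : 3 ≤ n)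
    (x₀ : E) (x f : ZMod n → E)
    (hind : ∀ m : ZMod n, AffineIndependent ℝ ![x₀, x m, x (m + 1)])
    (hmem : ∀ m : ZMod n, f m ∈ affineSpan ℝ {x m, x (m + 1)})
    (hperp : ∀ m : ZMod n, ⟪x₀ - f m, x (m + 1) - x m⟫ = 0) :
    ∑ m : ZMod n, ‖x m - x (m + 1)‖ • (‖f m - x₀‖⁻¹ • (f m - x₀)) =
      -∑ m : ZMod n,
        (Real.cot (∠ x₀ (x (m - 1)) (x m)) + Real.cot (∠ x₀ (x (m + 1)) (x m))) •
          (x₀ - x m) :=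
  fan_elementwise_sum_eq_cotangent_sum_general n x₀ x f hind hmem hperp
end
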